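/- arXiv:2011.08220 — 2 statements merged into one kernel-verified Lean document; each statement's English description precedes it below -/
import Mathlib

section
/- Let n ≥ 0 and r ≥ 2 be integers. Then |D_{1,r}(n)| = |F_{1,r}(n)|, i.e., the number of partitions of n in which exactly one part size appears at least r times equals the number of partitions of n in which exactly one difference of consecutive parts (including the last part, taking the part after the last to be 0) is at least r and all other such differences are at most r−1. -/
open scoped Classical

namespace BeckPaper

/-- The parts of a partition, sorted in non-increasing order. -/
def partsList {n : ℕ} (p : n.Partition) : List ℕ := p.parts.sort (· ≥ ·)

/-- The `i`-th part of a partition (`1`-indexed); `0` if `i` exceeds the number of parts. -/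
def part {n : ℕ} (p : n.Partition) (i : ℕ) : ℕ := (partsList p).getD (i - 1) 0

/-- `ℓ(λ)`: the number of parts of `λ`. -/
def numParts {n : ℕ} (p : n.Partition) : ℕ := Multiset.card p.parts

/-- `ℓ_t(λ)`: the number of parts of `λ` congruent to `t` modulo `r`. -/
def lMod (r t : ℕ) {n : ℕ} (p : n.Partition) : ℕ :=
  Multiset.card (p.parts.filter (fun x => x % r = t % r))

/-- `ℓ̄_t(λ)`: the number of different part sizes appearing at least `t` times in `λ`. -/
def lRep (t : ℕ) {n : ℕ} (p : n.Partition) : ℕ :=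
  (p.parts.toFinset.filter (fun s => t ≤ p.parts.count s)).card

/-- `ℓ̄(λ)`: the number of different part sizes of `λ`. -/
def lDist {n : ℕ} (p : n.Partition) : ℕ := p.parts.toFinset.card

/-- `d_t(λ)`: the number of indices `1 ≤ i ≤ ℓ(λ)` with `λ_i − λ_{i+1} ≥ t`. -/
def dCount (t : ℕ) {n : ℕ} (p : n.Partition) : ℕ :=
  ((Finset.Icc 1 (numParts p)).filter (fun i => t ≤ part p i - part p (i + 1))).card

/-- `λ ∈ O_r(n)`: no part is divisible by `r`. -/
def IsRegular (r : ℕ) {n : ℕ} (p : n.Partition) : Prop := ∀ x ∈ p.parts, ¬ r ∣ x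

/-- `λ ∈ D_r(n)`: no part appears more than `r − 1` times. -/
def IsRestricted (r : ℕ) {n : ℕ} (p : n.Partition) : Prop :=
  ∀ s : ℕ, p.parts.count s ≤ r - 1

/-- `λ ∈ F_r(n)`: all differences of consecutive parts (with `λ_{k+1} = 0`) are `≤ r − 1`. -/
def IsFlat (r : ℕ) {n : ℕ} (p : n.Partition) : Prop :=
  ∀ i, 1 ≤ i → i ≤ numParts p → part p i - part p (i + 1) ≤ r - 1

/-- `λ ∈ O_{1,r}(n)`: the set of part sizes divisible by `r` has exactly one element. -/
def IsOneRegular (r : ℕ) {n : ℕ} (p : n.Partition) : Prop :=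
  (p.parts.toFinset.filter (fun s => r ∣ s)).card = 1

/-- `λ ∈ D_{1,r}(n)`: exactly one part size appears at least `r` times. -/
def IsOneRestricted (r : ℕ) {n : ℕ} (p : n.Partition) : Prop :=
  (p.parts.toFinset.filter (fun s => r ≤ p.parts.count s)).card = 1

/-- `λ ∈ F_{1,r}(n)`: exactly one difference of consecutive parts is `≥ r`, and all
other such differences are `≤ r − 1`. -/
def IsOneFlat (r : ℕ) {n : ℕ} (p : n.Partition) : Prop :=
  ∃ i, (1 ≤ i ∧ i ≤ numParts p ∧ r ≤ part p i - part p (i + 1)) ∧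
    ∀ j, 1 ≤ j → j ≤ numParts p → j ≠ i → part p j - part p (j + 1) ≤ r - 1

/-- `λ ∈ T_r(n)`: exactly one part size has multiplicity at least `r`, and that
multiplicity is strictly less than `2r`. -/
def IsInT (r : ℕ) {n : ℕ} (p : n.Partition) : Prop :=
  ∃ s : ℕ, (r ≤ p.parts.count s ∧ p.parts.count s < 2 * r) ∧
    ∀ s' : ℕ, r ≤ p.parts.count s' → s' = s

/-! The bijection is conjugation. The conjugate `λ'` has parts `λ'_j = #{i : λ_i ≥ j}`, so
`λ'_i − λ'_{i+1}` is the multiplicity of `i` in `λ`, and `λ'` has `λ_1` parts. Hence the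
differences of `λ'` (with `λ'_{ℓ+1} = 0`) are exactly the multiplicities of `1, …, λ_1` in `λ`,
and both `λ ∈ D_{1,r}(n)` and `λ' ∈ F_{1,r}(n)` say that exactly one part size of `λ` has
multiplicity at least `r`. -/

theorem getD_le_of_forall_le {L : List ℕ} {a : ℕ} (h : ∀ x ∈ L, x ≤ a) (k : ℕ) :
    L.getD k 0 ≤ a := by
  rw [List.getD_eq_getElem?_getD]
  cases hk : L[k]? with
  | none => simp
  | some x => exact h x (List.mem_of_getElem? hk)

theorem lt_length_filter_le_iff_of_pairwise_ge {L : List ℕ} (hL : L.Pairwise (· ≥ ·))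
    {j : ℕ} (hj : 0 < j) (k : ℕ) : k < (L.filter (j ≤ ·)).length ↔ j ≤ L.getD k 0 := by
  induction L generalizing k with
  | nil => simp; omega
  | cons a t ih =>
    rw [List.pairwise_cons] at hL
    by_cases hja : j ≤ a
    · cases k with
      | zero => simp [hja]
      | succ k => simpa [List.filter_cons, hja] using ih hL.2 k
    · have hnil : t.filter (j ≤ ·) = [] := by
        simp only [List.filter_eq_nil_iff, decide_eq_true_eq, not_le]
        exact fun x hx => lt_of_le_of_lt (hL.1 x hx) (not_le.mp hja)
      have hle : (a :: t).getD k 0 ≤ a :=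
        getD_le_of_forall_le (List.forall_mem_cons.mpr ⟨le_rfl, hL.1⟩) k
      simp only [List.filter_cons, hja, decide_false, Bool.false_eq_true, if_false, hnil,
        List.length_nil]
      omega

theorem card_filter_Icc_one_le {m k : ℕ} (h : m ≤ k) :
    ((Finset.Icc 1 k).filter (· ≤ m)).card = m := by
  rw [show (Finset.Icc 1 k).filter (· ≤ m) = Finset.Icc 1 m by ext; simp; omega]
  simp

theorem sum_Icc_card_filter_le {n : ℕ} {s : Multiset ℕ} (hs : ∀ x ∈ s, x ≤ n) :
    ∑ j ∈ Finset.Icc 1 n, Multiset.card (s.filter (j ≤ ·)) = s.sum := by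
  induction s using Multiset.induction_on with
  | empty => simp
  | cons a t ih =>
    have hcard (j : ℕ) : Multiset.card ((a ::ₘ t).filter (j ≤ ·)) =
        Multiset.card (t.filter (j ≤ ·)) + if j ≤ a then 1 else 0 := by
      rw [Multiset.filter_cons]; split_ifs <;> simp [add_comm]
    simp only [hcard, Finset.sum_add_distrib, Finset.sum_boole, Nat.cast_id, Multiset.sum_cons,
      ih fun x hx => hs x (Multiset.mem_cons_of_mem hx),
      card_filter_Icc_one_le (hs a (Multiset.mem_cons_self a t))]
    omega

theorem sum_filter_pos (s : Multiset ℕ) : (s.filter (0 < ·)).sum = s.sum := by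
  conv_rhs => rw [← Multiset.filter_add_not (0 < ·) s, Multiset.sum_add]
  rw [Multiset.sum_eq_zero (s := s.filter (¬0 < ·)) fun x hx => ?_, add_zero]
  have := (Multiset.mem_filter.mp hx).2
  omega

theorem card_filter_le_eq_add_count (s : Multiset ℕ) (i : ℕ) :
    Multiset.card (s.filter (i ≤ ·)) = Multiset.card (s.filter (i + 1 ≤ ·)) + s.count i := by
  induction s using Multiset.induction_on with
  | empty => simp
  | cons a t ih =>
    simp only [Multiset.filter_cons, Multiset.card_add, Multiset.count_cons]
    split_ifs <;> simp only [Multiset.card_singleton, Multiset.card_zero] <;> omega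

section Conjugate

variable {n : ℕ}

def numPartsGe (p : n.Partition) (j : ℕ) : ℕ := Multiset.card (p.parts.filter (j ≤ ·))

theorem le_numPartsGe_iff (p : n.Partition) {i j : ℕ} (hi : 0 < i) (hj : 0 < j) :
    i ≤ numPartsGe p j ↔ j ≤ part p i := by
  have hsort : (partsList p).Pairwise (· ≥ ·) := Multiset.pairwise_sort _ _
  have hcard : numPartsGe p j = ((partsList p).filter (j ≤ ·)).length := by
    rw [numPartsGe, ← Multiset.sort_eq p.parts (· ≥ ·), Multiset.filter_coe, Multiset.coe_card]
    rfl
  rw [hcard, part, ← lt_length_filter_le_iff_of_pairwise_ge hsort hj]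
  omega

theorem numPartsGe_eq_add_count (p : n.Partition) (i : ℕ) :
    numPartsGe p i = numPartsGe p (i + 1) + p.parts.count i :=
  card_filter_le_eq_add_count p.parts i

theorem part_le (p : n.Partition) (i : ℕ) : part p i ≤ n := by
  refine getD_le_of_forall_le (fun x hx => Nat.Partition.le_of_mem_parts (p := p) ?_) _
  rwa [partsList, Multiset.mem_sort] at hx

theorem ext_of_numPartsGe {p q : n.Partition}
    (h : ∀ j, 0 < j → numPartsGe p j = numPartsGe q j) : p = q := by
  refine Nat.Partition.ext (Multiset.ext.mpr fun a => ?_)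
  rcases a.eq_zero_or_pos with rfl | ha
  · rw [Multiset.count_eq_zero.mpr fun h => (p.parts_pos h).ne' rfl,
      Multiset.count_eq_zero.mpr fun h => (q.parts_pos h).ne' rfl]
  · have hp := numPartsGe_eq_add_count p a
    have hq := numPartsGe_eq_add_count q a
    have ha₀ := h a ha
    have ha₁ := h (a + 1) a.succ_pos
    omega

-- `numPartsGe p j = 0` for `j > n`; the zero values for `j ≤ n` are filtered out.
def conj (p : n.Partition) : n.Partition where
  parts := ((Finset.Icc 1 n).val.map (numPartsGe p)).filter (0 < ·)
  parts_pos hx := (Multiset.mem_filter.mp hx).2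
  parts_sum := by
    rw [sum_filter_pos, ← Finset.sum_eq_multiset_sum]
    exact (sum_Icc_card_filter_le fun _ => Nat.Partition.le_of_mem_parts).trans p.parts_sum

theorem numPartsGe_conj (p : n.Partition) {j : ℕ} (hj : 0 < j) :
    numPartsGe (conj p) j = part p j := by
  have hfilter : (conj p).parts.filter (j ≤ ·) =
      ((Finset.Icc 1 n).val.map (numPartsGe p)).filter (j ≤ ·) := by
    rw [conj, Multiset.filter_filter]
    exact Multiset.filter_congr fun x _ => by omega
  rw [numPartsGe, hfilter, ← Multiset.countP_eq_card_filter, Multiset.countP_map,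
    ← Finset.filter_val, Finset.card_val,
    Finset.filter_congr fun i hi => le_numPartsGe_iff p hj (Finset.mem_Icc.mp hi).1]
  exact card_filter_Icc_one_le (part_le p j)

theorem part_conj (p : n.Partition) {i : ℕ} (hi : 0 < i) : part (conj p) i = numPartsGe p i := by
  refine eq_of_forall_le_iff fun j => ?_
  rcases j.eq_zero_or_pos with rfl | hj
  · simp
  rw [← le_numPartsGe_iff _ hi hj, numPartsGe_conj p hj, le_numPartsGe_iff p hj hi]

theorem conj_conj (p : n.Partition) : conj (conj p) = p :=
  ext_of_numPartsGe fun _ hj => (numPartsGe_conj (conj p) hj).trans (part_conj p hj)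

theorem part_conj_sub_part_conj (p : n.Partition) {i : ℕ} (hi : 0 < i) :
    part (conj p) i - part (conj p) (i + 1) = p.parts.count i := by
  rw [part_conj p hi, part_conj p (by omega), numPartsGe_eq_add_count p i]
  omega

theorem numParts_conj (p : n.Partition) : numParts (conj p) = part p 1 := by
  rw [← numPartsGe_conj p one_pos, numParts, numPartsGe, Multiset.filter_eq_self.mpr]
  exact fun x hx => (conj p).parts_pos hx

theorem pos_and_le_numParts_conj (p : n.Partition) {s : ℕ} (hs : s ∈ p.parts) :
    0 < s ∧ s ≤ numParts (conj p) := by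
  refine ⟨p.parts_pos hs, ?_⟩
  rw [numParts_conj, ← le_numPartsGe_iff p one_pos (p.parts_pos hs)]
  exact Multiset.card_pos_iff_exists_mem.mpr ⟨s, Multiset.mem_filter.mpr ⟨hs, le_rfl⟩⟩

theorem isOneRestricted_iff (p : n.Partition) {r : ℕ} (hr : 0 < r) :
    IsOneRestricted r p ↔ ∃! s, r ≤ p.parts.count s := by
  have hmem (s : ℕ) : s ∈ p.parts.toFinset ∧ r ≤ p.parts.count s ↔ r ≤ p.parts.count s :=
    and_iff_right_of_imp fun h => Multiset.mem_toFinset.mpr (Multiset.count_pos.mp (by omega))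
  simp only [IsOneRestricted, Finset.card_eq_one, Finset.eq_singleton_iff_unique_mem,
    Finset.mem_filter, hmem]
  rfl

theorem isOneFlat_conj_iff (p : n.Partition) {r : ℕ} (hr : 0 < r) :
    IsOneFlat r (conj p) ↔ ∃! s, r ≤ p.parts.count s := by
  have hmem {s : ℕ} (hs : r ≤ p.parts.count s) : s ∈ p.parts := Multiset.count_pos.mp (by omega)
  constructor
  · rintro ⟨i, ⟨hi, -, hir⟩, hother⟩
    rw [part_conj_sub_part_conj p hi] at hir
    refine ⟨i, hir, fun j hj => by_contra fun hji => ?_⟩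
    obtain ⟨hj0, hjle⟩ := pos_and_le_numParts_conj p (hmem hj)
    have := hother j hj0 hjle hji
    rw [part_conj_sub_part_conj p hj0] at this
    omega
  · rintro ⟨i, hir, huniq⟩
    obtain ⟨hi0, hile⟩ := pos_and_le_numParts_conj p (hmem hir)
    refine ⟨i, ⟨hi0, hile, (part_conj_sub_part_conj p hi0).symm ▸ hir⟩, fun j hj0 _ hji => ?_⟩
    rw [part_conj_sub_part_conj p hj0]
    have := mt (huniq j) hji
    omega

end Conjugate

theorem oneRestricted_eq_oneFlat (n r : ℕ) (hr : 2 ≤ r) :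
    (Finset.univ.filter (fun p : n.Partition => IsOneRestricted r p)).card = (Finset.univ.filter (fun p : n.Partition => IsOneFlat r p)).card := by
  refine Finset.card_equiv (Function.Involutive.toPerm conj conj_conj) fun p => ?_
  simp only [Finset.mem_filter, Finset.mem_univ, true_and]
  exact (isOneRestricted_iff p (by omega)).trans (isOneFlat_conj_iff p (by omega)).symm

end BeckPaper
end

section
/- Let n ≥ 0, r ≥ 2 and 1 ≤ t ≤ r−1 be integers. Then the total number of consecutive differences that are at least t in all r-flat partitions of n, plus the number of partitions of n with exactly one consecutive difference at least r and all others at most r−1, equals the number of triples (μ, a, i) with a ≥ 0 an integer, i ≥ 1 an integer, and μ an r-flat partition of n − i(ar + t): Σ_{λ∈F_r(n)} d_t(λ) + |F_{1,r}(n)| = #{(μ, a, i) : a ≥ 0, i ≥ 1, μ ∈ F_r(n − i(ar+t))}. -/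
open scoped Classical

namespace BeckPaper

/-!
Both sides count the pairs `(λ, i)` with `λ ⊢ n`, `λᵢ - λᵢ₊₁ ≥ t` and all other differences
`λⱼ - λⱼ₊₁ ≤ r - 1`. For `λ ∈ F_r(n)` these `i` are exactly the indices counted by `d_t(λ)`; for
`λ ∈ F_{1,r}(n)` the only one is the position of the large difference (as `t < r`); otherwise
there is none. Conversely, write `λᵢ - λᵢ₊₁ = t + a r + s` with `0 ≤ s < r` and subtract `a r + t`
from the first `i` parts: this leaves an `r`-flat partition `μ` of `n - i (a r + t)`, and adding
`a r + t` back to the first `i` parts of `μ`, padded with zeros, recovers `λ`.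
-/

open Finset

section Sequence

variable {n : ℕ}

lemma coe_partsList (p : n.Partition) : (partsList p : Multiset ℕ) = p.parts :=
  Multiset.sort_eq _ _

lemma length_partsList (p : n.Partition) : (partsList p).length = numParts p :=
  Multiset.length_sort _

lemma pos_of_mem_partsList {p : n.Partition} {x : ℕ} (hx : x ∈ partsList p) : 0 < x :=
  p.parts_pos (by rwa [← coe_partsList, Multiset.mem_coe])

/-- `seq p k` is the part `λ_{k+1}`, and `0` for `k ≥ ℓ(λ)`. -/
noncomputable def seq (p : n.Partition) : ℕ →₀ ℕ := (partsList p).toFinsupp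

lemma antitone_seq (p : n.Partition) : Antitone (seq p) := by
  intro k l hkl
  simp only [seq, List.toFinsupp_apply]
  rcases lt_or_ge l (partsList p).length with hl | hl
  · rw [List.getD_eq_getElem _ _ hl, List.getD_eq_getElem _ _ (hkl.trans_lt hl)]
    exact List.sortedGE_iff_getElem_ge_getElem_of_le.mp (Multiset.pairwise_sort _ _).sortedGE hkl
  · rw [List.getD_eq_default _ _ hl]
    exact Nat.zero_le _

lemma seq_eq_zero_iff {p : n.Partition} {k : ℕ} : seq p k = 0 ↔ numParts p ≤ k := by
  rw [seq, List.toFinsupp_apply, ← length_partsList]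
  rcases lt_or_ge k (partsList p).length with hk | hk
  · rw [List.getD_eq_getElem _ _ hk]
    exact iff_of_false (pos_of_mem_partsList (List.getElem_mem hk)).ne' hk.not_ge
  · exact iff_of_true (List.getD_eq_default _ _ hk) hk

lemma support_seq (p : n.Partition) : (seq p).support = range (numParts p) := by
  ext k
  rw [Finsupp.mem_support_iff, Ne, seq_eq_zero_iff, mem_range, not_le]

lemma degree_seq (p : n.Partition) : (seq p).degree = n := by
  rw [Finsupp.degree_apply, support_seq, ← length_partsList, Finset.sum_range]
  simp [seq, ← p.parts_sum, ← coe_partsList]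

def ofSeq (f : ℕ →₀ ℕ) (h : f.degree = n) : n.Partition where
  parts := f.support.val.map f
  parts_pos hx := by
    obtain ⟨k, hk, rfl⟩ := Multiset.mem_map.mp hx
    exact Nat.pos_of_ne_zero (Finsupp.mem_support_iff.mp hk)
  parts_sum := h

lemma ofSeq_seq (p : n.Partition) : ofSeq (seq p) (degree_seq p) = p := by
  ext1
  have hL : (List.range (partsList p).length).map ((partsList p).getD · 0) = partsList p :=
    List.ext_getElem (by simp) fun _ _ hi => by simp [hi]
  simp only [ofSeq, support_seq, ← length_partsList, range_val, ← Multiset.coe_range,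
    Multiset.map_coe]
  rw [← coe_partsList]
  exact congrArg _ hL

lemma parts_ofSeq (f : ℕ →₀ ℕ) (h : f.degree = n) : (ofSeq f h).parts = f.support.val.map f :=
  rfl

lemma exists_support_eq_range {f : ℕ →₀ ℕ} (hf : Antitone f) : ∃ N, f.support = range N := by
  have hlow : IsLowerSet (f.support : Set ℕ) := fun k l hlk hk =>
    Finsupp.mem_support_iff.mpr (Nat.pos_iff_ne_zero.mp
      ((Nat.pos_of_ne_zero (Finsupp.mem_support_iff.mp hk)).trans_le (hf hlk)))
  rcases hlow.eq_univ_or_Iio with huniv | ⟨N, hN⟩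
  · exact absurd (huniv ▸ f.support.finite_toSet) Set.infinite_univ
  · exact ⟨N, by rw [← coe_inj, hN, coe_range]⟩

lemma seq_ofSeq {f : ℕ →₀ ℕ} (hf : Antitone f) (h : f.degree = n) : seq (ofSeq f h) = f := by
  obtain ⟨N, hN⟩ := exists_support_eq_range hf
  have hsorted : ((List.range N).map f).Pairwise (· ≥ ·) :=
    List.pairwise_map.mpr ((List.pairwise_le_range (n := N)).imp fun hkl => hf hkl)
  have hparts : partsList (ofSeq f h) = (List.range N).map f := by
    simp only [partsList, ofSeq, hN, range_val, ← Multiset.coe_range, Multiset.map_coe,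
      Multiset.coe_sort]
    exact List.mergeSort_eq_self _ hsorted
  ext k
  rw [seq, List.toFinsupp_apply, hparts]
  rcases lt_or_ge k N with hk | hk
  · simp [hk]
  · rw [List.getD_eq_default _ _ (by simpa using hk), eq_comm, ← Finsupp.notMem_support_iff, hN]
    simpa using hk

end Sequence

section Gaps

def gap (f : ℕ → ℕ) (i : ℕ) : ℕ := f (i - 1) - f i

lemma gap_zero (f : ℕ → ℕ) : gap f 0 = 0 := Nat.sub_self _

noncomputable def block (i c : ℕ) : ℕ →₀ ℕ := ∑ k ∈ range i, Finsupp.single k c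

lemma block_apply (i c k : ℕ) : block i c k = if k < i then c else 0 := by
  simp [block, Finsupp.finsetSum_apply, Finsupp.single_apply]

lemma degree_block (i c : ℕ) : (block i c).degree = i * c := by
  simp [block, map_sum]

lemma antitone_block (i c : ℕ) : Antitone (block i c) := by
  intro k l hkl
  simp only [block_apply]
  split_ifs <;> omega

lemma gap_add_block {f : ℕ →₀ ℕ} (hf : Antitone f) {i : ℕ} (hi : i ≠ 0) (c j : ℕ) :
    gap ⇑(f + block i c) j = gap f j + if j = i then c else 0 := by
  have := hf (Nat.sub_le j 1)
  simp only [gap, Finsupp.coe_add, Pi.add_apply, block_apply]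
  split_ifs <;> omega

/-- The quotient `a` in `gap f i = t + a r + s` with `s < r`. -/
def gapQuot (r t : ℕ) (f : ℕ → ℕ) (i : ℕ) : ℕ := (gap f i - t) / r

lemma gapQuot_mul_add_le {r t : ℕ} {f : ℕ → ℕ} {i : ℕ} (ht : t ≤ gap f i) :
    gapQuot r t f i * r + t ≤ gap f i := by
  have := Nat.div_mul_le_self (gap f i - t) r
  rw [gapQuot]
  omega

lemma gapQuot_add_block {r t a : ℕ} {g : ℕ →₀ ℕ} (hg : Antitone g) {i : ℕ} (hi : i ≠ 0)
    (hgi : gap g i < r) : gapQuot r t ⇑(g + block i (a * r + t)) i = a := by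
  rw [gapQuot, gap_add_block hg hi, if_pos rfl, ← add_assoc, Nat.add_sub_cancel,
    Nat.add_mul_div_right _ _ (by omega), Nat.div_eq_of_lt hgi, zero_add]

/-- The first `i` entries of `f` lowered by the largest `a r + t` that keeps it antitone. -/
noncomputable def lower (r t : ℕ) (f : ℕ →₀ ℕ) (i : ℕ) : ℕ →₀ ℕ :=
  f - block i (gapQuot r t f i * r + t)

variable {r t : ℕ} {f : ℕ →₀ ℕ} {i : ℕ}

lemma lower_add_block (hf : Antitone f) (ht : t ≤ gap f i) :
    lower r t f i + block i (gapQuot r t f i * r + t) = f := by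
  refine tsub_add_cancel_of_le fun k => ?_
  rw [block_apply]
  split_ifs with hk
  · have := gapQuot_mul_add_le (r := r) ht
    have := hf (show k ≤ i - 1 by omega)
    rw [gap] at *
    omega
  · exact Nat.zero_le _

lemma antitone_lower (hf : Antitone f) (ht : t ≤ gap f i) : Antitone (lower r t f i) := by
  intro k l hkl
  have hc := gapQuot_mul_add_le (r := r) ht
  rw [gap] at hc ht
  have := hf hkl
  simp only [lower, Finsupp.coe_tsub, Pi.sub_apply, block_apply]
  split_ifs with hl hk hk
  · omega
  · omega
  · have := hf (show k ≤ i - 1 by omega)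
    have := hf (not_lt.mp hl)
    omega
  · omega

lemma gap_lower (hf : Antitone f) (hi : i ≠ 0) (ht : t ≤ gap f i) (j : ℕ) :
    gap (lower r t f i) j = if j = i then (gap f i - t) % r else gap f j := by
  have h := gap_add_block (antitone_lower (r := r) hf ht) hi (gapQuot r t f i * r + t) j
  rw [lower_add_block hf ht] at h
  have := Nat.div_add_mod' (gap f i - t) r
  split_ifs at h ⊢ with hj
  · subst hj
    rw [gapQuot] at h
    omega
  · omega

lemma lower_add_block_self {a : ℕ} {g : ℕ →₀ ℕ} (hg : Antitone g) (hi : i ≠ 0)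
    (hgi : gap g i < r) : lower r t (g + block i (a * r + t)) i = g := by
  rw [lower, gapQuot_add_block hg hi hgi, add_tsub_cancel_right]

end Gaps

section Flat

variable {n r t : ℕ}

lemma part_sub_part (p : n.Partition) (i : ℕ) : part p i - part p (i + 1) = gap (seq p) i := rfl

lemma gap_seq_eq_zero {p : n.Partition} {i : ℕ} (hi : i ∉ Icc 1 (numParts p)) :
    gap (seq p) i = 0 := by
  rw [mem_Icc, not_and_or, not_le, Nat.lt_one_iff, not_le] at hi
  rcases hi with rfl | hi
  · exact gap_zero _
  · rw [gap, seq_eq_zero_iff.mpr (by omega), Nat.zero_sub]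

lemma isFlat_iff_gap_seq {p : n.Partition} : IsFlat r p ↔ ∀ j, gap (seq p) j ≤ r - 1 := by
  refine ⟨fun h j => ?_, fun h j _ _ => h j⟩
  by_cases hj : j ∈ Icc 1 (numParts p)
  · exact h j (mem_Icc.mp hj).1 (mem_Icc.mp hj).2
  · simp [gap_seq_eq_zero hj]

def IsFlatAwayFrom (r : ℕ) {n : ℕ} (p : n.Partition) (i : ℕ) : Prop :=
  ∀ j, 1 ≤ j → j ≤ numParts p → j ≠ i → part p j - part p (j + 1) ≤ r - 1

noncomputable def markedIndices (r t : ℕ) {n : ℕ} (p : n.Partition) : Finset ℕ :=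
  {i ∈ Icc 1 (numParts p) | t ≤ part p i - part p (i + 1) ∧ IsFlatAwayFrom r p i}

lemma mem_markedIndices_iff (ht : 1 ≤ t) {p : n.Partition} {i : ℕ} :
    i ∈ markedIndices r t p ↔ t ≤ gap (seq p) i ∧ ∀ j ≠ i, gap (seq p) j ≤ r - 1 := by
  rw [markedIndices, mem_filter, part_sub_part]
  refine ⟨fun ⟨_, hti, hj⟩ => ⟨hti, fun j hji => ?_⟩, fun ⟨hti, hj⟩ => ⟨?_, hti, fun j _ _ => hj j⟩⟩
  · by_cases hmem : j ∈ Icc 1 (numParts p)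
    · exact hj j (mem_Icc.mp hmem).1 (mem_Icc.mp hmem).2 hji
    · simp [gap_seq_eq_zero hmem]
  · by_contra hmem
    rw [gap_seq_eq_zero hmem] at hti
    omega

lemma card_markedIndices (hr : 0 < r) (ht : t ≤ r) (p : n.Partition) :
    #(markedIndices r t p) =
      (if IsFlat r p then dCount t p else 0) + if IsOneFlat r p then 1 else 0 := by
  by_cases hflat : IsFlat r p
  · have hone : ¬ IsOneFlat r p := fun ⟨i, ⟨hi₁, hi₂, hri⟩, _⟩ => by
      have := hflat i hi₁ hi₂
      omega
    rw [if_pos hflat, if_neg hone, add_zero, dCount, markedIndices]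
    refine congrArg card (filter_congr fun i _ => and_iff_left fun j hj₁ hj₂ _ => hflat j hj₁ hj₂)
  by_cases hone : IsOneFlat r p
  · obtain ⟨i₀, ⟨hi₀₁, hi₀₂, hri₀⟩, hflat₀⟩ := hone
    rw [if_neg hflat, if_pos ⟨i₀, ⟨hi₀₁, hi₀₂, hri₀⟩, hflat₀⟩, zero_add, card_eq_one]
    refine ⟨i₀, eq_singleton_iff_unique_mem.mpr ⟨?_, fun i hi => ?_⟩⟩
    · exact mem_filter.mpr ⟨mem_Icc.mpr ⟨hi₀₁, hi₀₂⟩, by omega, hflat₀⟩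
    · by_contra hne
      have := (mem_filter.mp hi).2.2 i₀ hi₀₁ hi₀₂ (Ne.symm hne)
      omega
  · rw [if_neg hflat, if_neg hone, card_eq_zero, eq_empty_iff_forall_notMem]
    intro i hi
    obtain ⟨hmem, _, hrest⟩ := mem_filter.mp hi
    obtain ⟨hi₁, hi₂⟩ := mem_Icc.mp hmem
    by_cases hri : part p i - part p (i + 1) ≤ r - 1
    · exact hflat fun j hj₁ hj₂ => if hji : j = i then hji ▸ hri else hrest j hj₁ hj₂ hji
    · exact hone ⟨i, ⟨hi₁, hi₂, by omega⟩, hrest⟩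

end Flat

section Bijection

variable {n r t : ℕ}

lemma _root_.Nat.Partition.sigma_ext {β : Type*} {x y : Σ m : ℕ, m.Partition × β}
    (h : x.2.1.parts = y.2.1.parts) (hb : x.2.2 = y.2.2) : x = y := by
  obtain ⟨m, μ, b⟩ := x
  obtain ⟨m', μ', b'⟩ := y
  obtain rfl : m = m' := by rw [← μ.parts_sum, ← μ'.parts_sum, h]
  obtain rfl := Nat.Partition.ext h
  obtain rfl : b = b' := hb
  rfl

abbrev Triples (r t n : ℕ) :=
  {x : Σ m : ℕ, m.Partition × ℕ × ℕ //
    IsFlat r x.2.1 ∧ 1 ≤ x.2.2.2 ∧ x.1 + x.2.2.2 * (x.2.2.1 * r + t) = n}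

lemma lower_mem_triples (hr : 0 < r) (ht : 1 ≤ t) {p : n.Partition} {i : ℕ}
    (hi : i ∈ markedIndices r t p) :
    IsFlat r (ofSeq (lower r t (seq p) i) rfl) ∧ 1 ≤ i ∧
      (lower r t (seq p) i).degree + i * (gapQuot r t (seq p) i * r + t) = n := by
  obtain ⟨hti, hrest⟩ := (mem_markedIndices_iff ht).mp hi
  have hi0 : i ≠ 0 := by
    rintro rfl
    rw [gap_zero] at hti
    omega
  have hf := antitone_seq p
  refine ⟨isFlat_iff_gap_seq.mpr fun j => ?_, Nat.one_le_iff_ne_zero.mpr hi0, ?_⟩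
  · rw [seq_ofSeq (antitone_lower hf hti), gap_lower hf hi0 hti]
    split_ifs with hj
    · have := Nat.mod_lt (gap (seq p) i - t) hr
      omega
    · exact hrest j hj
  · rw [← degree_block, ← map_add, lower_add_block hf hti, degree_seq]

lemma mem_markedIndices_ofSeq_add_block (ht : 1 ≤ t) {m a i : ℕ} {μ : m.Partition}
    (hflat : IsFlat r μ) (hi : 1 ≤ i) (h : (seq μ + block i (a * r + t)).degree = n) :
    i ∈ markedIndices r t (ofSeq (seq μ + block i (a * r + t)) h) := by
  have hg := antitone_seq μ
  have hi0 : i ≠ 0 := by omega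
  rw [mem_markedIndices_iff ht, seq_ofSeq (hg.add (antitone_block i _)), gap_add_block hg hi0,
    if_pos rfl]
  refine ⟨by omega, fun j hj => ?_⟩
  rw [gap_add_block hg hi0, if_neg hj, add_zero]
  exact isFlat_iff_gap_seq.mp hflat j

noncomputable def markedEquivTriples (hr : 0 < r) (ht : 1 ≤ t) :
    (Σ p : n.Partition, markedIndices r t p) ≃ Triples r t n where
  toFun x := ⟨⟨_, ofSeq (lower r t (seq x.1) x.2) rfl, gapQuot r t (seq x.1) x.2, x.2⟩,
    lower_mem_triples hr ht x.2.2⟩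
  invFun y := ⟨ofSeq (seq y.1.2.1 + block y.1.2.2.2 (y.1.2.2.1 * r + t))
      (by rw [map_add, degree_seq, degree_block, y.2.2.2]), y.1.2.2.2,
    mem_markedIndices_ofSeq_add_block ht y.2.1 y.2.2.1 _⟩
  left_inv := by
    rintro ⟨p, i, hi⟩
    obtain ⟨hti, -⟩ := (mem_markedIndices_iff ht).mp hi
    have hf := antitone_seq p
    refine Sigma.subtype_ext (Nat.Partition.ext ?_) rfl
    dsimp only
    rw [parts_ofSeq, seq_ofSeq (antitone_lower hf hti), lower_add_block hf hti,
      ← parts_ofSeq _ (degree_seq p), ofSeq_seq]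
  right_inv := by
    rintro ⟨⟨m, μ, a, i⟩, hflat, hi, -⟩
    dsimp only at hflat hi
    have hg := antitone_seq μ
    have hi0 : i ≠ 0 := by omega
    have hgi : gap (seq μ) i < r := by
      have := isFlat_iff_gap_seq.mp hflat i
      omega
    refine Subtype.ext (Nat.Partition.sigma_ext ?_ ?_)
    · dsimp only
      rw [parts_ofSeq, seq_ofSeq (hg.add (antitone_block i _)), lower_add_block_self hg hi0 hgi,
        ← parts_ofSeq _ (degree_seq μ), ofSeq_seq]
    · dsimp only
      rw [seq_ofSeq (hg.add (antitone_block i _)), gapQuot_add_block hg hi0 hgi]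

end Bijection

theorem diff_flat_add_oneFlat_eq_triples (n r t : ℕ) (hr : 2 ≤ r) (ht1 : 1 ≤ t)
    (ht2 : t ≤ r - 1) :
    ((∑ p ∈ Finset.univ.filter (fun p : n.Partition => IsFlat r p), dCount t p) + (Finset.univ.filter (fun p : n.Partition => IsOneFlat r p)).card) =
      Nat.card {x : Σ m : ℕ, m.Partition × ℕ × ℕ //
        IsFlat r x.2.1 ∧ 1 ≤ x.2.2.2 ∧ x.1 + x.2.2.2 * (x.2.2.1 * r + t) = n} := by
  have hsum : ∑ p : n.Partition, #(markedIndices r t p) =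
      (∑ p ∈ univ.filter (fun p : n.Partition => IsFlat r p), dCount t p) +
        #(univ.filter fun p : n.Partition => IsOneFlat r p) := by
    simp only [card_markedIndices (by omega : 0 < r) (by omega : t ≤ r), sum_add_distrib,
      sum_ite, sum_const_zero, add_zero, ← card_eq_sum_ones]
  rw [← hsum, ← Nat.card_congr (markedEquivTriples (by omega) ht1), Nat.card_eq_fintype_card,
    Fintype.card_sigma]
  simp only [Fintype.card_coe]

end BeckPaper
end
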